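/- Let $g, f$ be generators and $G$ a sublinear monotone function as in the G-BSDE framework, and suppose $h_1, h_2 \in C^2(\mathbb{R})$ both satisfy the G-convexity pointwise condition: $g(t,h(y),h'(y)z) + 2G(f(t,h(y),h'(y)z) + \tfrac{1}{2}h''(y)z^2 + \tfrac{1}{2}h'(y)A) \ge h'(y)g(t,y,z) + 2h'(y)G(f(t,y,z) + \tfrac{1}{2}A)$ for all $t, y, z, A$. If $h_1$ is nondecreasing ($h_1' \ge 0$), then the composition $h_1 \circ h_2$ also satisfies the G-convexity pointwise condition. -/

import Mathlib

/-! Write `a = h₁'(h₂ y)`, `b = h₂'(y)`. By the chain rule the condition for `h₁ ∘ h₂` at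
`(t, y, z, A)` has the left-hand side of the condition for `h₁` at
`(t, h₂ y, b z, h₂''(y) z² + b A)`, whose right-hand side is `a` times the left-hand side of
the condition for `h₂` at `(t, y, z, A)`; multiplying the latter by `a ≥ 0` closes the chain. -/

/-- The pointwise G-convexity condition from Theorem 3: for all `t, y, z, A`,
`g(t,h(y),h'(y)z) + 2G(f(t,h(y),h'(y)z) + ½h''(y)z² + ½h'(y)A)
  ≥ h'(y)g(t,y,z) + 2h'(y)G(f(t,y,z) + ½A)`. -/
def GConvexCond (g f : ℝ → ℝ → ℝ → ℝ) (G : ℝ → ℝ) (h : ℝ → ℝ) : Prop :=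
  ∀ t y z A : ℝ,
    g t (h y) (deriv h y * z)
      + 2 * G (f t (h y) (deriv h y * z)
          + (1/2) * deriv (deriv h) y * z^2 + (1/2) * deriv h y * A)
      ≥ deriv h y * g t y z + 2 * deriv h y * G (f t y z + (1/2) * A)

theorem deriv_deriv_comp {𝕜 : Type*} [NontriviallyNormedField 𝕜] {h₁ h₂ : 𝕜 → 𝕜}
    (hd₁ : Differentiable 𝕜 h₁) (hd₂ : Differentiable 𝕜 h₂)
    (hdd₁ : Differentiable 𝕜 (deriv h₁)) (hdd₂ : Differentiable 𝕜 (deriv h₂)) (y : 𝕜) :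
    deriv (deriv (h₁ ∘ h₂)) y
      = deriv (deriv h₁) (h₂ y) * deriv h₂ y ^ 2 + deriv h₁ (h₂ y) * deriv (deriv h₂) y := by
  have hderiv : deriv (h₁ ∘ h₂) = fun x => deriv h₁ (h₂ x) * deriv h₂ x :=
    funext fun x => deriv_comp x (hd₁ _) (hd₂ _)
  rw [hderiv]
  exact (((hdd₁ (h₂ y)).hasDerivAt.comp y (hd₂ y).hasDerivAt).mul
    (hdd₂ y).hasDerivAt).deriv.trans (by rw [Function.comp_apply]; ring)

theorem GConvexCond_comp_general
    (g f : ℝ → ℝ → ℝ → ℝ) (G : ℝ → ℝ)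
    (h₁ h₂ : ℝ → ℝ) (hh₁ : ContDiff ℝ 2 h₁) (hh₂ : ContDiff ℝ 2 h₂)
    (hc₁ : GConvexCond g f G h₁) (hc₂ : GConvexCond g f G h₂)
    (hmono₁ : ∀ y : ℝ, deriv h₁ y ≥ 0) :
    GConvexCond g f G (h₁ ∘ h₂) := by
  have hd₁ := hh₁.differentiable two_ne_zero
  have hd₂ := hh₂.differentiable two_ne_zero
  intro t y z A
  rw [deriv_deriv_comp hd₁ hd₂ hh₁.differentiable_deriv_two hh₂.differentiable_deriv_two,
    deriv_comp y (hd₁ _) (hd₂ _), Function.comp_apply]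
  set a := deriv h₁ (h₂ y)
  set b := deriv h₂ y
  calc g t (h₁ (h₂ y)) (a * b * z)
        + 2 * G (f t (h₁ (h₂ y)) (a * b * z)
          + 1 / 2 * (deriv (deriv h₁) (h₂ y) * b ^ 2 + a * deriv (deriv h₂) y) * z ^ 2
          + 1 / 2 * (a * b) * A)
      = g t (h₁ (h₂ y)) (a * (b * z))
        + 2 * G (f t (h₁ (h₂ y)) (a * (b * z))
          + 1 / 2 * deriv (deriv h₁) (h₂ y) * (b * z) ^ 2
          + 1 / 2 * a * (deriv (deriv h₂) y * z ^ 2 + b * A)) := by ring_nf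
    _ ≥ a * g t (h₂ y) (b * z)
        + 2 * a * G (f t (h₂ y) (b * z) + 1 / 2 * (deriv (deriv h₂) y * z ^ 2 + b * A)) :=
      hc₁ t (h₂ y) (b * z) (deriv (deriv h₂) y * z ^ 2 + b * A)
    _ = a * (g t (h₂ y) (b * z)
        + 2 * G (f t (h₂ y) (b * z) + 1 / 2 * deriv (deriv h₂) y * z ^ 2 + 1 / 2 * b * A)) := by
      ring_nf
    _ ≥ a * (b * g t y z + 2 * b * G (f t y z + 1 / 2 * A)) :=
      mul_le_mul_of_nonneg_left (hc₂ t y z A) (hmono₁ _)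
    _ = a * b * g t y z + 2 * (a * b) * G (f t y z + 1 / 2 * A) := by ring

/-- If `h₁, h₂` satisfy the G-convexity pointwise condition and `h₁' ≥ 0`,
then so does the composition `h₁ ∘ h₂`. -/
theorem GConvexCond_comp
    (g f : ℝ → ℝ → ℝ → ℝ) (G : ℝ → ℝ)
    (hsubadd : ∀ x y : ℝ, G (x + y) ≤ G x + G y)
    (hpos : ∀ (l : ℝ), 0 ≤ l → ∀ x, G (l * x) = l * G x)
    (hmono : Monotone G)
    (h₁ h₂ : ℝ → ℝ) (hh₁ : ContDiff ℝ 2 h₁) (hh₂ : ContDiff ℝ 2 h₂)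
    (hc₁ : GConvexCond g f G h₁) (hc₂ : GConvexCond g f G h₂)
    (hmono₁ : ∀ y : ℝ, deriv h₁ y ≥ 0) :
    GConvexCond g f G (h₁ ∘ h₂) :=
  GConvexCond_comp_general g f G h₁ h₂ hh₁ hh₂ hc₁ hc₂ hmono₁
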